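/- Truncated minimum bound: let δ : ℕ → [0,∞) satisfy Σ_{t=T}^∞ δ(t) ≤ C T^{-α} for all T ≥ 1 and some constants C > 0, α > 0, and also Σ_{t=0}^∞ δ(t) < ∞. Define Γ(k) = Σ_{j=0}^∞ δ(j)δ(j+k). Then for every η ∈ (0,1], Σ_{k=0}^∞ min(Γ(k), η) = O(η^{α/(1+α)}) as η → 0; that is, there exists a constant C' with Σ_{k=0}^∞ min(Γ(k), η) ≤ C' η^{α/(1+α)}. -/

import Mathlib

/-!
The correlation sequence `Γ` inherits the tail decay of `δ`: every term of `Σ_{k ≥ K} Γ(k)` is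
`δ(j)` times a tail of `δ` starting at `j + K ≥ K`, so `Σ_{k ≥ K} Γ(k) ≤ (Σ δ) · C K^{-α}`.
Splitting `Σ_k min(Γ(k), η)` at `K ≈ η^{-1/(1+α)}`, the first `K` terms contribute at most `Kη`
and the rest at most the tail of `Γ`; the choice of `K` makes both of order `η^{α/(1+α)}`.
-/

noncomputable def autocorr (δ : ℕ → ℝ) (k : ℕ) : ℝ := ∑' j, δ j * δ (j + k)

lemma autocorr_nonneg {δ : ℕ → ℝ} (hδ0 : ∀ t, 0 ≤ δ t) (k : ℕ) : 0 ≤ autocorr δ k :=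
  tsum_nonneg fun j => mul_nonneg (hδ0 j) (hδ0 (j + k))

lemma tsum_nat_add_le_tsum {δ : ℕ → ℝ} (hδ0 : ∀ t, 0 ≤ δ t) (hδ : Summable δ) (n : ℕ) :
    ∑' t, δ (t + n) ≤ ∑' t, δ t :=
  tsum_comp_le_tsum_of_inj hδ hδ0 (add_left_injective n)

lemma summable_mul_nat_add {δ : ℕ → ℝ} (hδ0 : ∀ t, 0 ≤ δ t) (hδ : Summable δ) (K : ℕ) :
    Summable fun p : ℕ × ℕ => δ p.1 * δ (p.1 + (p.2 + K)) := by
  rw [summable_prod_of_nonneg fun p => mul_nonneg (hδ0 _) (hδ0 _)]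
  refine ⟨fun j => ?_, ?_⟩
  · show Summable fun k => δ j * δ (j + (k + K))
    simp_rw [add_left_comm j]
    exact ((summable_nat_add_iff (j + K)).2 hδ).mul_left (δ j)
  · refine (hδ.mul_right (∑' t, δ t)).of_nonneg_of_le
      (fun j => tsum_nonneg fun k => mul_nonneg (hδ0 _) (hδ0 _)) fun j => ?_
    show ∑' k, δ j * δ (j + (k + K)) ≤ δ j * ∑' t, δ t
    simp_rw [tsum_mul_left, add_left_comm j]
    exact mul_le_mul_of_nonneg_left (tsum_nat_add_le_tsum hδ0 hδ _) (hδ0 j)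

lemma summable_autocorr {δ : ℕ → ℝ} (hδ0 : ∀ t, 0 ≤ δ t) (hδ : Summable δ) :
    Summable (autocorr δ) := by
  show Summable fun k => ∑' j, δ j * δ (j + k)
  simpa only [Prod.fst_swap, Prod.snd_swap, add_zero] using
    (summable_mul_nat_add hδ0 hδ 0).prod_symm.prod

lemma tsum_autocorr_nat_add_le {δ : ℕ → ℝ} (hδ0 : ∀ t, 0 ≤ δ t) (hδ : Summable δ) {K : ℕ}
    {b : ℝ} (hb : ∀ T, K ≤ T → ∑' t, δ (t + T) ≤ b) :
    ∑' k, autocorr δ (k + K) ≤ (∑' t, δ t) * b := by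
  have hsum := summable_mul_nat_add hδ0 hδ K
  have hrow : ∀ j, ∑' k, δ j * δ (j + (k + K)) ≤ δ j * b := fun j => by
    rw [tsum_mul_left]
    refine mul_le_mul_of_nonneg_left ?_ (hδ0 j)
    simpa only [add_left_comm j] using hb (j + K) (Nat.le_add_left K j)
  calc ∑' k, autocorr δ (k + K) = ∑' j, ∑' k, δ j * δ (j + (k + K)) :=
        Summable.tsum_comm (f := fun j k => δ j * δ (j + (k + K))) hsum
    _ ≤ ∑' j, δ j * b := Summable.tsum_le_tsum hrow hsum.prod (hδ.mul_right b)
    _ = (∑' t, δ t) * b := tsum_mul_right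

lemma tsum_min_le_of_tail_le {g : ℕ → ℝ} (hg0 : ∀ k, 0 ≤ g k) (hg : Summable g) {η : ℝ}
    (hη : 0 ≤ η) (K : ℕ) {B : ℝ} (hB : ∑' k, g (k + K) ≤ B) :
    ∑' k, min (g k) η ≤ K * η + B := by
  have hmin : Summable fun k => min (g k) η :=
    hg.of_nonneg_of_le (fun k => le_min (hg0 k) hη) fun k => min_le_left _ _
  have hhead : ∑ k ∈ Finset.range K, min (g k) η ≤ K * η := by
    simpa using Finset.sum_le_sum fun k (_ : k ∈ Finset.range K) => min_le_right (g k) η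
  have htail : ∑' k, min (g (k + K)) η ≤ B :=
    (Summable.tsum_le_tsum (fun k => min_le_left (g (k + K)) η) ((summable_nat_add_iff K).2 hmin)
      ((summable_nat_add_iff K).2 hg)).trans hB
  rw [← hmin.sum_add_tsum_nat_add K]
  exact add_le_add hhead htail

lemma exists_nat_mul_le_and_rpow_neg_le {α η : ℝ} (hα : 0 < α) (hη : 0 < η) (hη1 : η ≤ 1) :
    ∃ K : ℕ, 1 ≤ K ∧ K * η ≤ 2 * η ^ (α / (1 + α)) ∧ (K : ℝ) ^ (-α) ≤ η ^ (α / (1 + α)) := by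
  set x := η ^ (-(1 + α)⁻¹)
  have hx1 : 1 ≤ x :=
    Real.one_le_rpow_of_pos_of_le_one_of_nonpos hη hη1 (neg_nonpos.2 (by positivity))
  have hxη : x * η = η ^ (α / (1 + α)) := by
    rw [← Real.rpow_add_one hη.ne']
    congr 1
    field_simp
    ring
  have hxα : x ^ (-α) = η ^ (α / (1 + α)) := by
    rw [← Real.rpow_mul hη.le]
    congr 1
    field_simp
  have hxK : x ≤ ⌈x⌉₊ := Nat.le_ceil x
  have hKx : (⌈x⌉₊ : ℝ) ≤ 2 * x := by linarith [Nat.ceil_lt_add_one (zero_le_one.trans hx1)]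
  refine ⟨⌈x⌉₊, Nat.one_le_ceil_iff.2 (by linarith), ?_, ?_⟩
  · rw [← hxη, ← mul_assoc]
    exact mul_le_mul_of_nonneg_right hKx hη.le
  · rw [← hxα]
    exact Real.rpow_le_rpow_of_nonpos (by linarith) hxK (by linarith)

/-- truncated minimum bound for `Γ(k) = Σ_j δ(j)δ(j+k)`. -/
theorem truncated_min_bound
    (δ : ℕ → ℝ) (hδpos : ∀ t, 0 ≤ δ t) (hδsum : Summable δ)
    (C α : ℝ) (hC : 0 < C) (hα : 0 < α)
    (htail : ∀ T : ℕ, 1 ≤ T → ∑' t : ℕ, δ (t + T) ≤ C * (T:ℝ) ^ (-α))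
    (Γ : ℕ → ℝ) (hΓ : ∀ k, Γ k = ∑' j : ℕ, δ j * δ (j + k)) :
    ∃ C' > 0, ∀ η : ℝ, 0 < η → η ≤ 1 →
      ∑' k : ℕ, min (Γ k) η ≤ C' * η ^ (α / (1 + α)) := by
  obtain rfl : Γ = autocorr δ := funext hΓ
  have hS : 0 ≤ ∑' t, δ t := tsum_nonneg hδpos
  refine ⟨2 + (∑' t, δ t) * C, by positivity, fun η hη hη1 => ?_⟩
  obtain ⟨K, hK1, hKη, hKα⟩ := exists_nat_mul_le_and_rpow_neg_le hα hη hη1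
  have htailK : ∀ T, K ≤ T → ∑' t, δ (t + T) ≤ C * (K : ℝ) ^ (-α) := fun T hKT =>
    (htail T (hK1.trans hKT)).trans <| mul_le_mul_of_nonneg_left
      (Real.rpow_le_rpow_of_nonpos (by positivity) (by exact_mod_cast hKT) (by linarith)) hC.le
  calc ∑' k, min (autocorr δ k) η ≤ K * η + (∑' t, δ t) * (C * (K : ℝ) ^ (-α)) :=
        tsum_min_le_of_tail_le (autocorr_nonneg hδpos) (summable_autocorr hδpos hδsum) hη.le K
          (tsum_autocorr_nat_add_le hδpos hδsum htailK)
    _ ≤ 2 * η ^ (α / (1 + α)) + (∑' t, δ t) * (C * η ^ (α / (1 + α))) := by gcongr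
    _ = (2 + (∑' t, δ t) * C) * η ^ (α / (1 + α)) := by ring
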